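/- For every positive integer n, the sign of g⁻¹(n) equals the Liouville function λ(n); equivalently, (−1)^{Ω(n)} · g⁻¹(n) > 0 for all n ≥ 1. -/

import Mathlib

/-!
Since `∑_{d ∣ n} (ε + 𝟙_P)(d) = ω(n) + 1`, where `𝟙_P` is the indicator of the primes, we have
`g = ζ ∗ (ε + 𝟙_P)` and hence `g⁻¹ = μ ∗ t` with `t = (ε + 𝟙_P)⁻¹`. The inverse `t` satisfies
`t(n) = -∑_{p ∣ n} t(n/p)`, so `λ(n) t(n) = ∑_{p ∣ n} λ(n/p) t(n/p) > 0` by induction on `n`.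
Convolving with `μ` keeps this sign pattern: `λ` is completely multiplicative, so
`λ(n) μ(d) t(n/d) = μ(d)² · λ(n/d) t(n/d) ≥ 0`, and the term `d = 1` is positive.
-/

open ArithmeticFunction Finset
open scoped ArithmeticFunction.Omega ArithmeticFunction.omega ArithmeticFunction.zeta
  ArithmeticFunction.Moebius

namespace ArithmeticFunction

variable {R : Type*}

def primeIndicator [Semiring R] : ArithmeticFunction R :=
  ⟨fun n => if n.Prime then 1 else 0, by simp [Nat.not_prime_zero]⟩

theorem primeIndicator_apply [Semiring R] (n : ℕ) :
    (primeIndicator : ArithmeticFunction R) n = if n.Prime then 1 else 0 :=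
  rfl

theorem coe_zeta_mul_primeIndicator_apply [Semiring R] {n : ℕ} :
    (↑ζ * (primeIndicator : ArithmeticFunction R)) n = ω n := by
  simp only [coe_zeta_mul_apply, primeIndicator_apply]
  rw [← sum_filter, ← Nat.primeFactors_eq_to_filter_divisors_prime, sum_const, nsmul_one,
    cardDistinctFactors_apply, ← List.card_toFinset, Nat.toFinset_factors]

theorem coe_zeta_mul_one_add_primeIndicator_apply [Semiring R] {n : ℕ} (hn : n ≠ 0) :
    (↑ζ * (1 + primeIndicator : ArithmeticFunction R)) n = ω n + 1 := by
  rw [mul_add, mul_one, add_apply, coe_zeta_mul_primeIndicator_apply, natCoe_apply,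
    zeta_apply_ne hn, Nat.cast_one, add_comm]

theorem one_add_primeIndicator_mul_apply [Semiring R] (t : ArithmeticFunction R) (n : ℕ) :
    ((1 + primeIndicator : ArithmeticFunction R) * t) n =
      t n + ∑ p ∈ n.primeFactors, t (n / p) := by
  rw [add_mul, one_mul, add_apply, mul_apply,
    Nat.sum_divisorsAntidiagonal (fun d e => primeIndicator d * t e),
    Nat.primeFactors_eq_to_filter_divisors_prime, sum_filter]
  simp [primeIndicator_apply, ite_mul]

theorem neg_one_pow_cardFactors_of_dvd [Monoid R] [HasDistribNeg R] {d n : ℕ} (hd : d ∣ n)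
    (hn : n ≠ 0) : (-1 : R) ^ Ω n = (-1) ^ Ω d * (-1) ^ Ω (n / d) := by
  obtain ⟨e, rfl⟩ := hd
  rw [Nat.mul_div_cancel_left _ (Nat.pos_of_ne_zero (left_ne_zero_of_mul hn)),
    cardFactors_mul (left_ne_zero_of_mul hn) (right_ne_zero_of_mul hn), pow_add]

section Sign

variable [CommRing R] [LinearOrder R] [IsStrictOrderedRing R]

def HasLiouvilleSign (f : ArithmeticFunction R) : Prop :=
  ∀ n, 0 < n → 0 < (-1 : R) ^ Ω n * f n

theorem hasLiouvilleSign_of_one_add_primeIndicator_mul_eq_one {t : ArithmeticFunction R}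
    (ht : (1 + primeIndicator) * t = 1) : HasLiouvilleSign t := by
  have hrec (n : ℕ) : t n + ∑ p ∈ n.primeFactors, t (n / p) = (1 : ArithmeticFunction R) n := by
    rw [← one_add_primeIndicator_mul_apply, ht]
  intro n hn
  induction n using Nat.strong_induction_on with
  | _ n ih =>
    obtain rfl | hn1 := (Nat.one_le_iff_ne_zero.mpr hn.ne').eq_or_lt
    · have ht1 : t 1 = 1 := by simpa using hrec 1
      simp [ht1]
    have hsum : (-1 : R) ^ Ω n * t n =
        ∑ p ∈ n.primeFactors, (-1 : R) ^ Ω (n / p) * t (n / p) := by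
      rw [eq_neg_of_add_eq_zero_left ((hrec n).trans (one_apply_ne hn1.ne')), mul_neg,
        mul_sum, ← sum_neg_distrib]
      refine sum_congr rfl fun p hp => ?_
      rw [neg_one_pow_cardFactors_of_dvd (Nat.dvd_of_mem_primeFactors hp) hn.ne',
        cardFactors_apply_prime (Nat.prime_of_mem_primeFactors hp)]
      ring
    rw [hsum]
    refine sum_pos (fun p hp => ih _ ?_ ?_) (Nat.nonempty_primeFactors.mpr hn1)
    · exact Nat.div_lt_self hn (Nat.prime_of_mem_primeFactors hp).one_lt
    · exact Nat.div_pos (Nat.le_of_mem_primeFactors hp) (Nat.pos_of_mem_primeFactors hp)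

theorem neg_one_pow_cardFactors_mul_moebius_nonneg (n : ℕ) : 0 ≤ (-1 : R) ^ Ω n * μ n := by
  by_cases hn : Squarefree n
  · rw [moebius_apply_of_squarefree hn, Int.cast_pow, Int.cast_neg, Int.cast_one]
    exact mul_self_nonneg _
  · simp [moebius_eq_zero_of_not_squarefree hn]

theorem HasLiouvilleSign.mul_left {a b : ArithmeticFunction R}
    (ha : ∀ n, 0 ≤ (-1 : R) ^ Ω n * a n) (ha1 : 0 < a 1) (hb : HasLiouvilleSign b) :
    HasLiouvilleSign (a * b) := by
  intro n hn
  rw [mul_apply, Nat.sum_divisorsAntidiagonal (fun d e => a d * b e), mul_sum]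
  have hterm {d : ℕ} (hd : d ∈ n.divisors) : (-1 : R) ^ Ω n * (a d * b (n / d)) =
      ((-1) ^ Ω d * a d) * ((-1) ^ Ω (n / d) * b (n / d)) := by
    rw [neg_one_pow_cardFactors_of_dvd (Nat.dvd_of_mem_divisors hd) hn.ne']
    ring
  have hcodiv_pos {d : ℕ} (hd : d ∈ n.divisors) : 0 < n / d :=
    Nat.div_pos (Nat.divisor_le hd) (Nat.pos_of_mem_divisors hd)
  refine sum_pos' (fun d hd => ?_) ⟨1, Nat.one_mem_divisors.mpr hn.ne', ?_⟩
  · rw [hterm hd]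
    exact mul_nonneg (ha d) (hb _ (hcodiv_pos hd)).le
  · rw [hterm (Nat.one_mem_divisors.mpr hn.ne')]
    simpa [Nat.div_one] using mul_pos ha1 (hb n hn)

end Sign

end ArithmeticFunction

/-- Let `g` be the arithmetic function with `g(n) = ω(n) + 1` for `n ≥ 1`
and let `ginv` be its Dirichlet inverse (characterized by `g * ginv = 1`).  Then the sign
of `ginv(n)` equals the Liouville function `λ(n) = (−1)^{Ω(n)}`; equivalently
`(−1)^{Ω(n)} · ginv(n) > 0` for all `n ≥ 1`. -/
theorem stmt_5 (g ginv : ArithmeticFunction ℝ)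
    (hg : ∀ n : ℕ, 0 < n → g n = (ArithmeticFunction.cardDistinctFactors n : ℝ) + 1)
    (hginv : g * ginv = 1) :
    ∀ n : ℕ, 0 < n → 0 < (-1 : ℝ) ^ (ArithmeticFunction.cardFactors n) * ginv n := by
  have hg_eq : g = ↑ζ * (1 + primeIndicator : ArithmeticFunction ℝ) := by
    ext n
    rcases n.eq_zero_or_pos with rfl | hn
    · simp
    rw [hg n hn, coe_zeta_mul_one_add_primeIndicator_apply hn.ne']
  have ht : (1 + primeIndicator : ArithmeticFunction ℝ) * (↑ζ * ginv) = 1 := by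
    rw [mul_left_comm, ← mul_assoc, ← hg_eq, hginv]
  have hginv_eq : ginv = ↑μ * (↑ζ * ginv) := by
    rw [← mul_assoc, coe_moebius_mul_coe_zeta, one_mul]
  rw [hginv_eq]
  exact (hasLiouvilleSign_of_one_add_primeIndicator_mul_eq_one ht).mul_left
    neg_one_pow_cardFactors_mul_moebius_nonneg (by simp)
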